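/- Fix w > 0 and λ, θ ∈ [0,1]. Let β₁, β₂ > 0 satisfy 4β₁β₂ > w², let H_β := [[2β₁,−w],[−w,2β₂]] and let G_β := H_β^{-1}. Define γ := (4β₁β₂ − w²)/(2wλ(1−λ) + 2β₂λ² + 2β₁(1−λ)²) and Z := (2β₁ − λ²γ)/(w + λ(1−λ)γ). Then (λ, 1−λ) G_β (θ, 1−θ)ᵀ = (θ/√Z + (1−θ)√Z) / (γ·((1−λ)√Z + λ/√Z)). -/

import Mathlib

open Matrix

set_option maxHeartbeats 1600000 in
/-- the quadratic form (λ, 1−λ) G_β (θ, 1−θ)ᵀ in the variables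
γ and Z. -/
theorem stmt15 (w lam θ : ℝ) (hw : 0 < w)
    (hlam : lam ∈ Set.Icc (0 : ℝ) 1) (hθ : θ ∈ Set.Icc (0 : ℝ) 1)
    (b1 b2 : ℝ) (hb1 : 0 < b1) (hb2 : 0 < b2) (hdet : 4 * b1 * b2 > w ^ 2) :
    (let Hb : Matrix (Fin 2) (Fin 2) ℝ := !![2 * b1, -w; -w, 2 * b2]
     let Gb := Hb⁻¹
     let gam : ℝ := (4 * b1 * b2 - w ^ 2) /
       (2 * w * lam * (1 - lam) + 2 * b2 * lam ^ 2 + 2 * b1 * (1 - lam) ^ 2)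
     let Z : ℝ := (2 * b1 - lam ^ 2 * gam) / (w + lam * (1 - lam) * gam)
     (![lam, 1 - lam]) ⬝ᵥ (Gb *ᵥ ![θ, 1 - θ]) =
       (θ / Real.sqrt Z + (1 - θ) * Real.sqrt Z) /
         (gam * ((1 - lam) * Real.sqrt Z + lam / Real.sqrt Z))) := by
  obtain ⟨hl0, hl1⟩ := hlam
  have hD : 0 < 4 * b1 * b2 - w ^ 2 := by linarith
  set P : ℝ := w * lam + 2 * b1 * (1 - lam) with hPdef
  set Q : ℝ := w * (1 - lam) + 2 * b2 * lam with hQdef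
  have hP : 0 < P := by
    rw [hPdef]; rcases le_total lam (1/2) with h | h <;> nlinarith
  have hQ : 0 < Q := by
    rw [hQdef]; rcases le_total lam (1/2) with h | h <;> nlinarith
  set S : ℝ := 2 * w * lam * (1 - lam) + 2 * b2 * lam ^ 2 + 2 * b1 * (1 - lam) ^ 2
    with hSdef
  have hSPQ : S = (1 - lam) * P + lam * Q := by rw [hPdef, hQdef, hSdef]; ring
  have hS : 0 < S := by
    rw [hSPQ]; rcases le_total lam (1/2) with h | h <;> nlinarith
  clear_value P Q S
  intro Hb Gb gam Z
  have hgam : gam = (4 * b1 * b2 - w ^ 2) / S := rfl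
  have hZ : Z = P / Q := by
    show (2 * b1 - lam ^ 2 * gam) / (w + lam * (1 - lam) * gam) = P / Q
    rw [hgam]
    have h1 : 2 * b1 - lam ^ 2 * ((4 * b1 * b2 - w ^ 2) / S) = P ^ 2 / S := by
      field_simp
      rw [hPdef, hSdef]; ring
    have h2 : w + lam * (1 - lam) * ((4 * b1 * b2 - w ^ 2) / S) = P * Q / S := by
      field_simp
      rw [hPdef, hQdef, hSdef]; ring
    rw [h1, h2]
    field_simp
  have hdet' : Hb.det = 4 * b1 * b2 - w ^ 2 := by
    show (!![2 * b1, -w; -w, 2 * b2] : Matrix (Fin 2) (Fin 2) ℝ).det = _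
    rw [Matrix.det_fin_two_of]; ring
  have hinv : Gb = (4 * b1 * b2 - w ^ 2)⁻¹ • !![2 * b2, w; w, 2 * b1] := by
    show Hb⁻¹ = _
    rw [Matrix.inv_def, hdet', Ring.inverse_eq_inv]
    congr 1
    show (!![2 * b1, -w; -w, 2 * b2] : Matrix (Fin 2) (Fin 2) ℝ).adjugate = _
    rw [Matrix.adjugate_fin_two_of]
    norm_num
  clear_value Z gam Gb Hb
  rw [hinv, hZ, hgam]
  have hLHS : (![lam, 1 - lam]) ⬝ᵥ
      (((4 * b1 * b2 - w ^ 2)⁻¹ • !![2 * b2, w; w, 2 * b1]) *ᵥ ![θ, 1 - θ]) =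
      (θ * Q + (1 - θ) * P) / (4 * b1 * b2 - w ^ 2) := by
    simp [Matrix.mulVec, dotProduct, Fin.sum_univ_two]
    rw [hPdef, hQdef]
    field_simp
    ring
  rw [hLHS]
  have hZpos : 0 < P / Q := by positivity
  set s := Real.sqrt (P / Q) with hsdef
  clear_value s
  have hspos : 0 < s := by rw [hsdef]; exact Real.sqrt_pos.mpr hZpos
  have hs2 : s ^ 2 = P / Q := by rw [hsdef]; exact Real.sq_sqrt hZpos.le
  have hsQ : s ^ 2 * Q = P := by rw [hs2]; field_simp
  have hdenpos : 0 < (1 - lam) * s + lam / s := by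
    have h1 : 0 ≤ lam / s := div_nonneg hl0 hspos.le
    rcases le_total lam (1/2) with h | h
    · nlinarith
    · have h2 : 0 < lam / s := div_pos (by linarith) hspos
      nlinarith
  rw [div_eq_div_iff hD.ne' (by positivity)]
  field_simp
  linear_combination (θ * (1 - lam) - (1 - θ) * lam) * hsQ -
    (θ + (1 - θ) * s ^ 2) * hSPQ
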